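/- Let c_v > 0, 0 < ϱ₋ < ϱ₊, p₋, p₊ > 0 and v₋ ∈ ℝ, and assume ϱ₁ > ((2c_v+1)ϱ₋ + ϱ₊)/2 + √(ϱ₊² + (4c_v² − 1)ϱ₊ϱ₋)/2. Set R := ϱ₋ − ϱ₊ and, for u > 0: v₊ := v₋ − u, A := ϱ₋v₋ − ϱ₊v₊, B := ϱ₋ϱ₊u² − (ϱ₊ − ϱ₋)(p₊ − p₋), μ₀ := A/R − (1/R)·√(B(ϱ₁−ϱ₊)/(ϱ₁−ϱ₋)), μ₁ := A/R − (1/R)·√(B(ϱ₁−ϱ₋)/(ϱ₁−ϱ₊)), β := (ϱ₊v₊ + μ₁(ϱ₁−ϱ₊))/ϱ₁, Y := ϱ₁ϱ₊·(v₋+μ₀)/(v₋−μ₀) + ϱ₁ϱ₋·(μ₁+v₊)/(μ₁−v₊), X := ϱ₊ϱ₋(p₋ − p₊) + (2c_v+1)ϱ₁(ϱ₋p₊ − ϱ₊p₋), Z := p₊ + ((ϱ₁−ϱ₊)ϱ₊/ϱ₁)·(v₊ − μ₁)², p₁ := (YZ − X)/(Y + ϱ₁R), ε₁ := (ϱ₁RZ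 + X)/(ϱ₁(Y + ϱ₁R)), and ε₂ := (1/(ϱ₁ϱ₊))·[(ϱ₁−ϱ₊)(p₁+p₊) + 2c_v(ϱ₁p₊ − ϱ₊p₁)] + ε₁·((v₊+β)/(v₊−β)·(ϱ₁−ϱ₊)/ϱ₊ − 1). Then there exists u₀ > 0 such that for all u ≥ u₀: ε₂ > 0. -/

import Mathlib

/-!
As `u → ∞` the interface speeds grow linearly, `μᵢ / u → Mᵢ = (ϱ₊ − Sᵢ)/(ϱ₋ − ϱ₊)` with
`S₀ = √(ϱ₋ϱ₊(ϱ₁−ϱ₊)/(ϱ₁−ϱ₋))` and `S₁ = √(ϱ₋ϱ₊(ϱ₁−ϱ₋)/(ϱ₁−ϱ₊))`. Giving pressures weight 2 and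
velocities weight 1, `ε₂` is homogeneous of degree 2, so `ε₂ / u²` is `ε₂` evaluated at the rescaled
states `(p/u², v/u, μ/u)`, and these converge to `(0, 0, 0, −1, M₀, M₁)`. At that point
`ε₂ = Z∞ (2ϱ₁ − (2c_v+1)(ϱ₋+S₁)) / (2S₁ϱ₁)` with `Z∞ > 0`, and the hypothesis on `ϱ₁` makes the
middle factor positive.
-/

noncomputable section

/-- `B = ϱ₋ϱ₊u² − (ϱ₊ − ϱ₋)(p₊ − p₋)`. -/
def Bu (ϱm ϱp pm pp u : ℝ) : ℝ := ϱm * ϱp * u ^ 2 - (ϱp - ϱm) * (pp - pm)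

/-- The left interface speed `μ₀ = A/R − (1/R)·√(B(ϱ₁−ϱ₊)/(ϱ₁−ϱ₋))`,
with `v₋` fixed and `v₊ = v₋ − u`. -/
def mu0u (ϱm ϱp pm pp ϱ1 vm u : ℝ) : ℝ :=
  (ϱm * vm - ϱp * (vm - u)) / (ϱm - ϱp) -
    (1 / (ϱm - ϱp)) * Real.sqrt (Bu ϱm ϱp pm pp u * ((ϱ1 - ϱp) / (ϱ1 - ϱm)))

/-- The right interface speed `μ₁ = A/R − (1/R)·√(B(ϱ₁−ϱ₋)/(ϱ₁−ϱ₊))`,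
with `v₋` fixed and `v₊ = v₋ − u`. -/
def mu1u (ϱm ϱp pm pp ϱ1 vm u : ℝ) : ℝ :=
  (ϱm * vm - ϱp * (vm - u)) / (ϱm - ϱp) -
    (1 / (ϱm - ϱp)) * Real.sqrt (Bu ϱm ϱp pm pp u * ((ϱ1 - ϱm) / (ϱ1 - ϱp)))

/-- `Y = ϱ₁ϱ₊·(v₋+μ₀)/(v₋−μ₀) + ϱ₁ϱ₋·(μ₁+v₊)/(μ₁−v₊)`. -/
def Yu (ϱm ϱp pm pp ϱ1 vm u : ℝ) : ℝ :=
  ϱ1 * ϱp * ((vm + mu0u ϱm ϱp pm pp ϱ1 vm u) / (vm - mu0u ϱm ϱp pm pp ϱ1 vm u)) +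
  ϱ1 * ϱm * ((mu1u ϱm ϱp pm pp ϱ1 vm u + (vm - u)) /
    (mu1u ϱm ϱp pm pp ϱ1 vm u - (vm - u)))

/-- `X = ϱ₊ϱ₋(p₋ − p₊) + (2c_v+1)ϱ₁(ϱ₋p₊ − ϱ₊p₋)`. -/
def Xu (cv ϱm ϱp pm pp ϱ1 : ℝ) : ℝ :=
  ϱp * ϱm * (pm - pp) + (2 * cv + 1) * ϱ1 * (ϱm * pp - ϱp * pm)

/-- `Z = p₊ + ((ϱ₁−ϱ₊)ϱ₊/ϱ₁)(v₊ − μ₁)²`, with `v₊ = v₋ − u`. -/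
def Zu (ϱm ϱp pm pp ϱ1 vm u : ℝ) : ℝ :=
  pp + ((ϱ1 - ϱp) * ϱp / ϱ1) * ((vm - u) - mu1u ϱm ϱp pm pp ϱ1 vm u) ^ 2

/-- The middle pressure `p₁ = (YZ − X)/(Y + ϱ₁R)` with `R = ϱ₋ − ϱ₊`. -/
def p1u (cv ϱm ϱp pm pp ϱ1 vm u : ℝ) : ℝ :=
  (Yu ϱm ϱp pm pp ϱ1 vm u * Zu ϱm ϱp pm pp ϱ1 vm u - Xu cv ϱm ϱp pm pp ϱ1) /
    (Yu ϱm ϱp pm pp ϱ1 vm u + ϱ1 * (ϱm - ϱp))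

/-- The subsolution parameter `ε₁ = (ϱ₁RZ + X)/(ϱ₁(Y + ϱ₁R))` with `R = ϱ₋ − ϱ₊`. -/
def eps1u (cv ϱm ϱp pm pp ϱ1 vm u : ℝ) : ℝ :=
  (ϱ1 * (ϱm - ϱp) * Zu ϱm ϱp pm pp ϱ1 vm u + Xu cv ϱm ϱp pm pp ϱ1) /
    (ϱ1 * (Yu ϱm ϱp pm pp ϱ1 vm u + ϱ1 * (ϱm - ϱp)))

/-- The second component `β = (ϱ₊v₊ + μ₁(ϱ₁−ϱ₊))/ϱ₁` of the middle velocity,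
with `v₊ = v₋ − u`. -/
def betau (ϱm ϱp pm pp ϱ1 vm u : ℝ) : ℝ :=
  (ϱp * (vm - u) + mu1u ϱm ϱp pm pp ϱ1 vm u * (ϱ1 - ϱp)) / ϱ1

/-- The subsolution parameter `ε₂`. -/
def eps2u (cv ϱm ϱp pm pp ϱ1 vm u : ℝ) : ℝ :=
  (1 / (ϱ1 * ϱp)) *
      ((ϱ1 - ϱp) * (p1u cv ϱm ϱp pm pp ϱ1 vm u + pp) +
        2 * cv * (ϱ1 * pp - ϱp * p1u cv ϱm ϱp pm pp ϱ1 vm u)) +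
    eps1u cv ϱm ϱp pm pp ϱ1 vm u *
      (((vm - u) + betau ϱm ϱp pm pp ϱ1 vm u) /
          ((vm - u) - betau ϱm ϱp pm pp ϱ1 vm u) * ((ϱ1 - ϱp) / ϱp) - 1)

open Filter Topology

namespace OneFan

/- The quantities of the construction with `v₋, v₊, μ₀, μ₁` as free variables, so that they can be
rescaled. -/

section Formulas

variable (cv ϱm ϱp ϱ1 : ℝ)

def Y (vm vp μ0 μ1 : ℝ) : ℝ :=
  ϱ1 * ϱp * ((vm + μ0) / (vm - μ0)) + ϱ1 * ϱm * ((μ1 + vp) / (μ1 - vp))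

def Z (pp vp μ1 : ℝ) : ℝ := pp + ((ϱ1 - ϱp) * ϱp / ϱ1) * (vp - μ1) ^ 2

def p1 (pm pp vm vp μ0 μ1 : ℝ) : ℝ :=
  (Y ϱm ϱp ϱ1 vm vp μ0 μ1 * Z ϱp ϱ1 pp vp μ1 - Xu cv ϱm ϱp pm pp ϱ1) /
    (Y ϱm ϱp ϱ1 vm vp μ0 μ1 + ϱ1 * (ϱm - ϱp))

def eps1 (pm pp vm vp μ0 μ1 : ℝ) : ℝ :=
  (ϱ1 * (ϱm - ϱp) * Z ϱp ϱ1 pp vp μ1 + Xu cv ϱm ϱp pm pp ϱ1) /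
    (ϱ1 * (Y ϱm ϱp ϱ1 vm vp μ0 μ1 + ϱ1 * (ϱm - ϱp)))

def beta (vp μ1 : ℝ) : ℝ := (ϱp * vp + μ1 * (ϱ1 - ϱp)) / ϱ1

def eps2 (pm pp vm vp μ0 μ1 : ℝ) : ℝ :=
  (1 / (ϱ1 * ϱp)) *
      ((ϱ1 - ϱp) * (p1 cv ϱm ϱp ϱ1 pm pp vm vp μ0 μ1 + pp) +
        2 * cv * (ϱ1 * pp - ϱp * p1 cv ϱm ϱp ϱ1 pm pp vm vp μ0 μ1)) +
    eps1 cv ϱm ϱp ϱ1 pm pp vm vp μ0 μ1 *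
      ((vp + beta ϱp ϱ1 vp μ1) / (vp - beta ϱp ϱ1 vp μ1) * ((ϱ1 - ϱp) / ϱp) - 1)

theorem eps2u_eq (pm pp vm u : ℝ) :
    eps2u cv ϱm ϱp pm pp ϱ1 vm u = eps2 cv ϱm ϱp ϱ1 pm pp vm (vm - u)
      (mu0u ϱm ϱp pm pp ϱ1 vm u) (mu1u ϱm ϱp pm pp ϱ1 vm u) := rfl

section Scaling

variable {t : ℝ} (pm pp vm vp μ0 μ1 : ℝ)

theorem Y_div (ht : t ≠ 0) :
    Y ϱm ϱp ϱ1 (vm / t) (vp / t) (μ0 / t) (μ1 / t) = Y ϱm ϱp ϱ1 vm vp μ0 μ1 := by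
  simp only [Y, ← add_div, ← sub_div, div_div_div_cancel_right₀ ht]

theorem Z_div : Z ϱp ϱ1 (pp / t ^ 2) (vp / t) (μ1 / t) = Z ϱp ϱ1 pp vp μ1 / t ^ 2 := by
  simp only [Z]; ring

theorem Xu_div : Xu cv ϱm ϱp (pm / t ^ 2) (pp / t ^ 2) ϱ1 = Xu cv ϱm ϱp pm pp ϱ1 / t ^ 2 := by
  simp only [Xu]; ring

theorem beta_div : beta ϱp ϱ1 (vp / t) (μ1 / t) = beta ϱp ϱ1 vp μ1 / t := by
  simp only [beta]; ring

theorem eps2_div (ht : t ≠ 0) :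
    eps2 cv ϱm ϱp ϱ1 (pm / t ^ 2) (pp / t ^ 2) (vm / t) (vp / t) (μ0 / t) (μ1 / t) =
      eps2 cv ϱm ϱp ϱ1 pm pp vm vp μ0 μ1 / t ^ 2 := by
  simp only [eps2, p1, eps1, Y_div _ _ _ _ _ _ _ ht, Z_div, Xu_div, beta_div, ← add_div,
    ← sub_div, div_div_div_cancel_right₀ ht]
  ring

end Scaling

theorem tendsto_eps2 {α : Type*} {l : Filter α} {pm pp vm vp μ0 μ1 : α → ℝ}
    {Pm Pp a b m0 m1 : ℝ} (hpm : Tendsto pm l (𝓝 Pm)) (hpp : Tendsto pp l (𝓝 Pp))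
    (hvm : Tendsto vm l (𝓝 a)) (hvp : Tendsto vp l (𝓝 b)) (hμ0 : Tendsto μ0 l (𝓝 m0))
    (hμ1 : Tendsto μ1 l (𝓝 m1)) (h0 : a - m0 ≠ 0) (h1 : m1 - b ≠ 0) (hϱ1 : ϱ1 ≠ 0)
    (hY : Y ϱm ϱp ϱ1 a b m0 m1 + ϱ1 * (ϱm - ϱp) ≠ 0) (hβ : b - beta ϱp ϱ1 b m1 ≠ 0) :
    Tendsto (fun x => eps2 cv ϱm ϱp ϱ1 (pm x) (pp x) (vm x) (vp x) (μ0 x) (μ1 x)) l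
      (𝓝 (eps2 cv ϱm ϱp ϱ1 Pm Pp a b m0 m1)) := by
  have tY : Tendsto (fun x => Y ϱm ϱp ϱ1 (vm x) (vp x) (μ0 x) (μ1 x)) l
      (𝓝 (Y ϱm ϱp ϱ1 a b m0 m1)) :=
    (((hvm.add hμ0).div (hvm.sub hμ0) h0).const_mul _).add
      (((hμ1.add hvp).div (hμ1.sub hvp) h1).const_mul _)
  have tZ : Tendsto (fun x => Z ϱp ϱ1 (pp x) (vp x) (μ1 x)) l (𝓝 (Z ϱp ϱ1 Pp b m1)) :=
    hpp.add (((hvp.sub hμ1).pow 2).const_mul _)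
  have tX : Tendsto (fun x => Xu cv ϱm ϱp (pm x) (pp x) ϱ1) l (𝓝 (Xu cv ϱm ϱp Pm Pp ϱ1)) :=
    (((hpm.sub hpp).const_mul _)).add (((hpp.const_mul _).sub (hpm.const_mul _)).const_mul _)
  have tp1 := ((tY.mul tZ).sub tX).div (tY.add_const _) hY
  have teps1 := ((tZ.const_mul (ϱ1 * (ϱm - ϱp))).add tX).div ((tY.add_const _).const_mul ϱ1)
    (mul_ne_zero hϱ1 hY)
  have tβ : Tendsto (fun x => beta ϱp ϱ1 (vp x) (μ1 x)) l (𝓝 (beta ϱp ϱ1 b m1)) :=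
    ((hvp.const_mul _).add (hμ1.mul_const _)).div_const _
  exact (((tp1.add hpp).const_mul _).add (((hpp.const_mul _).sub (tp1.const_mul _)).const_mul _)
    |>.const_mul _).add (teps1.mul ((((hvp.add tβ).div (hvp.sub tβ) hβ).mul_const _).sub_const _))

end Formulas

section Speeds

variable (ϱm ϱp pm pp vm : ℝ)

theorem tendsto_sqrt_Bu_mul_div_atTop (k : ℝ) :
    Tendsto (fun u => √(Bu ϱm ϱp pm pp u * k) / u) atTop (𝓝 √(ϱm * ϱp * k)) := by
  have hB : Tendsto (fun u => Bu ϱm ϱp pm pp u * k / u ^ 2) atTop (𝓝 (ϱm * ϱp * k)) := by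
    have h := (tendsto_const_nhds (x := ϱm * ϱp * k)).sub
      ((tendsto_const_nhds (x := (ϱp - ϱm) * (pp - pm) * k)).div_atTop
        (tendsto_pow_atTop two_ne_zero))
    rw [sub_zero] at h
    refine h.congr' ?_
    filter_upwards [eventually_ne_atTop 0] with u hu
    simp only [Bu]
    field_simp
  refine hB.sqrt.congr' ?_
  filter_upwards [eventually_ge_atTop 0] with u hu
  rw [Real.sqrt_div' _ (sq_nonneg u), Real.sqrt_sq hu]

theorem tendsto_speed_div_atTop (k : ℝ) :
    Tendsto (fun u => ((ϱm * vm - ϱp * (vm - u)) / (ϱm - ϱp) -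
      (1 / (ϱm - ϱp)) * √(Bu ϱm ϱp pm pp u * k)) / u) atTop
      (𝓝 ((ϱp - √(ϱm * ϱp * k)) / (ϱm - ϱp))) := by
  have h := ((((tendsto_const_nhds (x := (ϱm - ϱp) * vm)).div_atTop tendsto_id).add_const ϱp).sub
    (tendsto_sqrt_Bu_mul_div_atTop ϱm ϱp pm pp k)).div_const (ϱm - ϱp)
  rw [zero_add] at h
  refine h.congr' ?_
  filter_upwards [eventually_ne_atTop 0] with u hu
  simp only [id]
  field_simp
  ring

end Speeds

section LimitPoint

variable (cv : ℝ) {ϱm ϱp ϱ1 S : ℝ} (m0 : ℝ)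

theorem slope_sub_neg_one (hR : ϱm ≠ ϱp) :
    (ϱp - S) / (ϱm - ϱp) - -1 = (ϱm - S) / (ϱm - ϱp) := by
  field_simp [sub_ne_zero.2 hR]
  ring

theorem Y_add_at_limit (hR : ϱm ≠ ϱp) (hS : S ≠ ϱm) (hm0 : m0 ≠ 0) :
    Y ϱm ϱp ϱ1 0 (-1) m0 ((ϱp - S) / (ϱm - ϱp)) + ϱ1 * (ϱm - ϱp) =
      2 * ϱ1 * (ϱp - ϱm) * S / (ϱm - S) := by
  have hR' : ϱm - ϱp ≠ 0 := sub_ne_zero.2 hR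
  have hS' : ϱm - S ≠ 0 := sub_ne_zero.2 hS.symm
  simp only [Y, zero_add, zero_sub, div_neg, div_self hm0, slope_sub_neg_one hR]
  field_simp
  ring

theorem neg_one_sub_beta_at_limit (hR : ϱm ≠ ϱp) (hϱ1 : ϱ1 ≠ 0) :
    -1 - beta ϱp ϱ1 (-1) ((ϱp - S) / (ϱm - ϱp)) = (ϱ1 - ϱp) * (S - ϱm) / (ϱ1 * (ϱm - ϱp)) := by
  have hR' : ϱm - ϱp ≠ 0 := sub_ne_zero.2 hR
  simp only [beta]
  field_simp
  ring

theorem eps2_at_limit (hR : ϱm ≠ ϱp) (hϱ1 : ϱ1 ≠ 0) (hϱp : ϱp ≠ 0) (hϱ1p : ϱ1 ≠ ϱp)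
    (hS : S ≠ ϱm) (hS₀ : S ≠ 0) (hm0 : m0 ≠ 0) :
    eps2 cv ϱm ϱp ϱ1 0 0 0 (-1) m0 ((ϱp - S) / (ϱm - ϱp)) =
      Z ϱp ϱ1 0 (-1) ((ϱp - S) / (ϱm - ϱp)) * (2 * ϱ1 - (2 * cv + 1) * (ϱm + S)) /
        (2 * S * ϱ1) := by
  have hR' : ϱm - ϱp ≠ 0 := sub_ne_zero.2 hR
  have hS' : ϱm - S ≠ 0 := sub_ne_zero.2 hS.symm
  have hϱ1p' : ϱ1 - ϱp ≠ 0 := sub_ne_zero.2 hϱ1p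
  have hSm : S - ϱm ≠ 0 := sub_ne_zero.2 hS
  have hβ := neg_one_sub_beta_at_limit (S := S) hR hϱ1
  have hβ' : -1 + beta ϱp ϱ1 (-1) ((ϱp - S) / (ϱm - ϱp)) =
      ((ϱ1 - ϱp) * (ϱm - S) - 2 * ϱ1 * (ϱm - ϱp)) / (ϱ1 * (ϱm - ϱp)) := by
    simp only [beta]; field_simp; ring
  have hY := eq_sub_of_add_eq (Y_add_at_limit (ϱ1 := ϱ1) m0 hR hS hm0)
  have hX : Xu cv ϱm ϱp 0 0 ϱ1 = 0 := by simp only [Xu]; ring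
  simp only [eps2, p1, eps1, hβ, hβ', hY, hX]
  generalize Z ϱp ϱ1 0 (-1) ((ϱp - S) / (ϱm - ϱp)) = z
  field_simp
  ring

theorem eps2_at_limit_pos (hϱm : 0 < ϱm) (hϱmp : ϱm < ϱp) (hϱ1p : ϱp < ϱ1) (hS : ϱm < S)
    (hK : (2 * cv + 1) * (ϱm + S) < 2 * ϱ1) (hm0 : m0 ≠ 0) :
    0 < eps2 cv ϱm ϱp ϱ1 0 0 0 (-1) m0 ((ϱp - S) / (ϱm - ϱp)) := by
  have hϱp : 0 < ϱp := hϱm.trans hϱmp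
  have hϱ1 : 0 < ϱ1 := hϱp.trans hϱ1p
  have hS₀ : 0 < S := hϱm.trans hS
  rw [eps2_at_limit cv m0 hϱmp.ne hϱ1.ne' hϱp.ne' hϱ1p.ne' hS.ne' hS₀.ne' hm0]
  have hZ : 0 < Z ϱp ϱ1 0 (-1) ((ϱp - S) / (ϱm - ϱp)) := by
    have hm1 : -1 - (ϱp - S) / (ϱm - ϱp) ≠ 0 := by
      rw [← neg_sub, slope_sub_neg_one hϱmp.ne]
      exact neg_ne_zero.2 (div_ne_zero (sub_ne_zero.2 hS.ne) (sub_ne_zero.2 hϱmp.ne))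
    have := sub_pos.2 hϱ1p
    simp only [Z, zero_add]
    positivity
  have := sub_pos.2 hK
  positivity

end LimitPoint

section CriticalDensity

variable (cv : ℝ) {ϱm ϱp ϱ1 : ℝ}

def criticalDensity (cv ϱm ϱp : ℝ) : ℝ :=
  ((2 * cv + 1) * ϱm + ϱp) / 2 + √(ϱp ^ 2 + (4 * cv ^ 2 - 1) * ϱp * ϱm) / 2

theorem le_criticalDensity (hϱm : 0 ≤ ϱm) (hϱmp : ϱm ≤ ϱp) : ϱp ≤ criticalDensity cv ϱm ϱp := by
  have h : ϱp - (2 * cv + 1) * ϱm ≤ √(ϱp ^ 2 + (4 * cv ^ 2 - 1) * ϱp * ϱm) :=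
    (le_abs_self _).trans <| Real.abs_le_sqrt <| by
      nlinarith [mul_nonneg (mul_nonneg hϱm (sub_nonneg.2 hϱmp)) (sq_nonneg (2 * cv + 1))]
  unfold criticalDensity
  linarith

theorem rhoMinus_lt_sqrt (hϱm : 0 < ϱm) (hϱmp : ϱm < ϱp) (hϱ1 : ϱp < ϱ1) :
    ϱm < √(ϱm * ϱp * ((ϱ1 - ϱm) / (ϱ1 - ϱp))) := by
  rw [Real.lt_sqrt hϱm.le, ← mul_div_assoc, lt_div_iff₀ (sub_pos.2 hϱ1)]
  nlinarith [mul_pos (mul_pos hϱm (sub_pos.2 hϱmp)) (hϱm.trans (hϱmp.trans hϱ1))]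

theorem sqrt_lt_rhoPlus (hϱm : 0 < ϱm) (hϱmp : ϱm < ϱp) (hϱ1 : ϱp < ϱ1) :
    √(ϱm * ϱp * ((ϱ1 - ϱp) / (ϱ1 - ϱm))) < ϱp := by
  rw [Real.sqrt_lt' (hϱm.trans hϱmp), ← mul_div_assoc, div_lt_iff₀ (by linarith)]
  nlinarith [mul_pos (mul_pos (hϱm.trans hϱmp) (sub_pos.2 hϱmp)) (hϱm.trans (hϱmp.trans hϱ1))]

theorem mul_add_sqrt_lt_of_criticalDensity_lt (hϱm : 0 < ϱm) (hϱmp : ϱm < ϱp)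
    (hϱ1 : criticalDensity cv ϱm ϱp < ϱ1) :
    (2 * cv + 1) * (ϱm + √(ϱm * ϱp * ((ϱ1 - ϱm) / (ϱ1 - ϱp)))) < 2 * ϱ1 := by
  set c := 2 * cv + 1
  set D := ϱp ^ 2 + (4 * cv ^ 2 - 1) * ϱp * ϱm
  set a := 2 * ϱ1 - c * ϱm - ϱp
  have hϱ1p : ϱp < ϱ1 := (le_criticalDensity cv hϱm.le hϱmp.le).trans_lt hϱ1
  have hsqrtD : √D < a := by unfold criticalDensity at hϱ1; linarith
  have ha : 0 < a := (Real.sqrt_nonneg D).trans_lt hsqrtD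
  have hDa : D < a ^ 2 := (Real.sqrt_lt' ha).1 hsqrtD
  -- `(2ϱ₁ − cϱ₋)²(ϱ₁ − ϱ₊) − c²ϱ₋ϱ₊(ϱ₁ − ϱ₋) = ϱ₁ (a² − D)`
  have key : c ^ 2 * (ϱm * ϱp * ((ϱ1 - ϱm) / (ϱ1 - ϱp))) < (2 * ϱ1 - c * ϱm) ^ 2 := by
    rw [← mul_div_assoc, ← mul_div_assoc, div_lt_iff₀ (sub_pos.2 hϱ1p)]
    nlinarith [mul_pos (hϱm.trans (hϱmp.trans hϱ1p)) (sub_pos.2 hDa)]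
  have hsq : (c * √(ϱm * ϱp * ((ϱ1 - ϱm) / (ϱ1 - ϱp)))) ^ 2 < (2 * ϱ1 - c * ϱm) ^ 2 := by
    have hpos : 0 ≤ ϱm * ϱp * ((ϱ1 - ϱm) / (ϱ1 - ϱp)) :=
      mul_nonneg (by nlinarith) (div_nonneg (by linarith) (by linarith))
    rwa [mul_pow, Real.sq_sqrt hpos]
  nlinarith [lt_of_pow_lt_pow_left₀ 2 (by linarith) hsq]

end CriticalDensity

theorem tendsto_eps2u_div_sq_atTop (cv ϱm ϱp pm pp ϱ1 vm : ℝ) (hR : ϱm ≠ ϱp) (hϱ1 : ϱ1 ≠ 0)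
    (hϱ1p : ϱ1 ≠ ϱp) (hS0 : √(ϱm * ϱp * ((ϱ1 - ϱp) / (ϱ1 - ϱm))) ≠ ϱp)
    (hS1 : √(ϱm * ϱp * ((ϱ1 - ϱm) / (ϱ1 - ϱp))) ≠ ϱm)
    (hS1₀ : √(ϱm * ϱp * ((ϱ1 - ϱm) / (ϱ1 - ϱp))) ≠ 0) :
    Tendsto (fun u => eps2u cv ϱm ϱp pm pp ϱ1 vm u / u ^ 2) atTop
      (𝓝 (eps2 cv ϱm ϱp ϱ1 0 0 0 (-1) ((ϱp - √(ϱm * ϱp * ((ϱ1 - ϱp) / (ϱ1 - ϱm)))) / (ϱm - ϱp))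
        ((ϱp - √(ϱm * ϱp * ((ϱ1 - ϱm) / (ϱ1 - ϱp)))) / (ϱm - ϱp)))) := by
  set S0 := √(ϱm * ϱp * ((ϱ1 - ϱp) / (ϱ1 - ϱm)))
  set S1 := √(ϱm * ϱp * ((ϱ1 - ϱm) / (ϱ1 - ϱp)))
  have hR' : ϱm - ϱp ≠ 0 := sub_ne_zero.2 hR
  have hM0 : (ϱp - S0) / (ϱm - ϱp) ≠ 0 := div_ne_zero (sub_ne_zero.2 hS0.symm) hR'
  have hM1 : (ϱp - S1) / (ϱm - ϱp) - -1 ≠ 0 := by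
    rw [slope_sub_neg_one hR]
    exact div_ne_zero (sub_ne_zero.2 hS1.symm) hR'
  have hY : Y ϱm ϱp ϱ1 0 (-1) ((ϱp - S0) / (ϱm - ϱp)) ((ϱp - S1) / (ϱm - ϱp)) +
      ϱ1 * (ϱm - ϱp) ≠ 0 := by
    rw [Y_add_at_limit _ hR hS1 hM0]
    exact div_ne_zero (by simp [hϱ1, sub_ne_zero.2 hR.symm, hS1₀]) (sub_ne_zero.2 hS1.symm)
  have hβ : -1 - beta ϱp ϱ1 (-1) ((ϱp - S1) / (ϱm - ϱp)) ≠ 0 := by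
    rw [neg_one_sub_beta_at_limit hR hϱ1]
    exact div_ne_zero (mul_ne_zero (sub_ne_zero.2 hϱ1p) (sub_ne_zero.2 hS1))
      (mul_ne_zero hϱ1 hR')
  have hvp : Tendsto (fun u : ℝ => (vm - u) / u) atTop (𝓝 (-1)) := by
    have h := (tendsto_const_nhds (x := vm)).div_atTop tendsto_id |>.sub_const 1
    rw [zero_sub] at h
    refine h.congr' ?_
    filter_upwards [eventually_ne_atTop 0] with u hu
    simp only [id, sub_div, div_self hu]
  have hpow := tendsto_pow_atTop (α := ℝ) two_ne_zero
  refine (tendsto_eps2 cv ϱm ϱp ϱ1 ((tendsto_const_nhds (x := pm)).div_atTop hpow)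
    ((tendsto_const_nhds (x := pp)).div_atTop hpow)
    ((tendsto_const_nhds (x := vm)).div_atTop tendsto_id) hvp
    (tendsto_speed_div_atTop ϱm ϱp pm pp vm _) (tendsto_speed_div_atTop ϱm ϱp pm pp vm _)
    (by rwa [zero_sub, neg_ne_zero]) hM1 hϱ1 hY hβ).congr' ?_
  filter_upwards [eventually_ne_atTop 0] with u hu
  rw [eps2u_eq, ← eps2_div _ _ _ _ _ _ _ _ _ _ hu]
  rfl

end OneFan

theorem eps2_positive_large_u
    (cv ϱm ϱp pm pp ϱ1 vm : ℝ)
    (hϱm : 0 < ϱm) (hϱmp : ϱm < ϱp)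
    (hϱ1 : ((2 * cv + 1) * ϱm + ϱp) / 2 +
        Real.sqrt (ϱp ^ 2 + (4 * cv ^ 2 - 1) * ϱp * ϱm) / 2 < ϱ1) :
    ∃ u0 : ℝ, 0 < u0 ∧ ∀ u : ℝ, u0 ≤ u →
      0 < eps2u cv ϱm ϱp pm pp ϱ1 vm u := by
  open OneFan in
  have hϱ1p : ϱp < ϱ1 := (le_criticalDensity cv hϱm.le hϱmp.le).trans_lt hϱ1
  have hϱ1₀ : 0 < ϱ1 := hϱm.trans (hϱmp.trans hϱ1p)
  have hS0 := sqrt_lt_rhoPlus hϱm hϱmp hϱ1p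
  have hS1 := rhoMinus_lt_sqrt hϱm hϱmp hϱ1p
  have hlim := tendsto_eps2u_div_sq_atTop cv ϱm ϱp pm pp ϱ1 vm hϱmp.ne hϱ1₀.ne' hϱ1p.ne'
    hS0.ne hS1.ne' (hϱm.trans hS1).ne'
  have hpos := eps2_at_limit_pos cv _ hϱm hϱmp hϱ1p hS1
    (mul_add_sqrt_lt_of_criticalDensity_lt cv hϱm hϱmp hϱ1)
    (div_ne_zero (sub_ne_zero.2 hS0.ne') (sub_ne_zero.2 hϱmp.ne))
  obtain ⟨u0, hu0, hu0_pos⟩ := ((eventually_forall_ge_atTop.2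
    (hlim.eventually (lt_mem_nhds hpos))).and (eventually_gt_atTop 0)).exists
  exact ⟨u0, hu0_pos, fun u hu =>
    (div_pos_iff_of_pos_right (pow_pos (hu0_pos.trans_le hu) 2)).1 (hu0 u hu)⟩
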